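/- arXiv:math/0412374 — 5 statements merged into one kernel-verified Lean document; each statement's English description precedes it below -/
import Mathlib

section
/- Let p ≥ 3 be a prime, d ≥ 0 and 0 ≤ r < p integers. Then the p-adic valuation of (dp + r)!/((-p)^d · d! · r!) − 1 is at least 1; equivalently, (dp+r)! ≡ (-p)^d · d! · r! modulo p^{d+1}, with (dp+r)!/p^d ≡ (-1)^d d! r! (mod p). -/
private lemma fact_add_prod (n m : ℕ) :
    ((n + m).factorial : ℤ) = n.factorial * ∏ i ∈ Finset.range m, ((n : ℤ) + i + 1) := by
  induction m with
  | zero => simp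
  | succ m ih =>
    rw [← Nat.add_assoc, Nat.factorial_succ, Finset.prod_range_succ]
    push_cast
    rw [ih]; ring

private lemma prod_shift_mod (p m k : ℕ) :
    (((∏ i ∈ Finset.range m, ((k * p : ℤ) + i + 1)) : ℤ) : ZMod p)
      = (m.factorial : ZMod p) := by
  rw [← Finset.prod_range_add_one_eq_factorial]
  push_cast
  refine Finset.prod_congr rfl fun i _ => ?_
  simp [ZMod.natCast_self]

private lemma fact_dp (p d : ℕ) (hp : 0 < p) :
    ((d * p).factorial : ℤ) = p ^ d * d.factorial *
      ∏ k ∈ Finset.range d, ∏ i ∈ Finset.range (p - 1), ((k * p : ℤ) + i + 1) := by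
  obtain ⟨q, rfl⟩ : ∃ q, q + 1 = p := ⟨p - 1, by omega⟩
  simp only [Nat.add_sub_cancel]
  induction d with
  | zero => simp
  | succ d ih =>
    have h1 : (d + 1) * (q + 1) = d * (q + 1) + (q + 1) := by ring
    rw [h1, fact_add_prod, ih, Finset.prod_range_succ (n := d),
      Finset.prod_range_succ (n := q), Nat.factorial_succ]
    push_cast
    ring

/-- For a prime `p ≥ 3`, `d ≥ 0` and `0 ≤ r < p`, one has
`v_p((dp+r)!/((-p)^d d! r!) − 1) ≥ 1`, equivalently
`(dp+r)! ≡ (-p)^d · d! · r!  (mod p^(d+1))`. -/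
theorem factorial_mod_prime_pow (p d r : ℕ) (hp : p.Prime) (hp3 : 3 ≤ p) (hr : r < p) :
    padicNorm p (((d * p + r).factorial : ℚ) / ((-(p : ℚ)) ^ d * d.factorial * r.factorial) - 1)
      ≤ (p : ℚ)⁻¹ ∧
    (((d * p + r).factorial : ℤ)) ≡ (-(p : ℤ)) ^ d * d.factorial * r.factorial
      [ZMOD ((p : ℤ) ^ (d + 1))] := by
  haveI : Fact p.Prime := ⟨hp⟩
  set N : ℤ := (∏ k ∈ Finset.range d, ∏ i ∈ Finset.range (p - 1), ((k * p : ℤ) + i + 1)) *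
      ∏ i ∈ Finset.range r, ((d * p : ℤ) + i + 1) with hN
  -- key factorization
  have key : ((d * p + r).factorial : ℤ) = p ^ d * d.factorial * N := by
    rw [fact_add_prod, fact_dp p d hp.pos, hN]
    push_cast
    ring
  -- mod p computation
  have hmodp : ((N : ℤ) : ZMod p) = (-1) ^ d * (r.factorial : ZMod p) := by
    rw [hN, Int.cast_mul, prod_shift_mod p r d, Int.cast_prod,
      Finset.prod_congr rfl fun k (_ : k ∈ Finset.range d) => prod_shift_mod p (p - 1) k,
      Finset.prod_const, ZMod.wilsons_lemma, Finset.card_range]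
  have hdvd : (p : ℤ) ∣ N - (-1) ^ d * r.factorial := by
    rw [← ZMod.intCast_zmod_eq_zero_iff_dvd]
    push_cast
    rw [hmodp]
    ring
  constructor
  · -- padic norm part
    have hp0 : (p : ℚ) ≠ 0 := by exact_mod_cast hp.pos.ne'
    have hd0 : (d.factorial : ℚ) ≠ 0 := by exact_mod_cast d.factorial_pos.ne'
    have hr0 : (r.factorial : ℚ) ≠ 0 := by exact_mod_cast r.factorial_pos.ne'
    have hsq : ((-1 : ℚ) ^ d) * ((-1 : ℚ) ^ d) = 1 := by
      rw [← pow_add, ← two_mul, pow_mul]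
      norm_num
    set m : ℤ := (-1) ^ d * N - r.factorial with hm
    have hG0 : (-(p : ℚ)) ^ d * d.factorial * r.factorial ≠ 0 :=
      mul_ne_zero (mul_ne_zero (pow_ne_zero _ (neg_ne_zero.mpr hp0)) hd0) hr0
    have hx : ((d * p + r).factorial : ℚ) / ((-(p : ℚ)) ^ d * d.factorial * r.factorial) - 1
        = (m : ℚ) / (r.factorial : ℚ) := by
      have hkeyQ : ((d * p + r).factorial : ℚ) = p ^ d * d.factorial * (N : ℚ) := by
        exact_mod_cast congrArg (fun z : ℤ => (z : ℚ)) key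
      rw [div_sub_one hG0, div_eq_div_iff hG0 hr0, hkeyQ, hm, neg_pow]
      push_cast
      linear_combination (-((p : ℚ) ^ d * (d.factorial : ℚ) * (r.factorial : ℚ) * (N : ℚ))) * hsq
    rw [hx, padicNorm.div]
    have hnr : padicNorm p (r.factorial : ℚ) = 1 := by
      rw [padicNorm.nat_eq_one_iff]
      intro h
      exact absurd ((Nat.Prime.dvd_factorial hp).mp h) (Nat.not_le.mpr hr)
    rw [hnr, div_one]
    have hsqZ : ((-1 : ℤ) ^ d) * ((-1 : ℤ) ^ d) = 1 := by
      rw [← pow_add, ← two_mul, pow_mul]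
      norm_num
    have hdm : ((p : ℤ) ^ 1) ∣ m := by
      rw [pow_one, hm]
      have h5 : (-1 : ℤ) ^ d * (N - (-1) ^ d * r.factorial) = (-1) ^ d * N - r.factorial := by
        linear_combination (-(r.factorial : ℤ)) * hsqZ
      rw [← h5]
      exact Dvd.dvd.mul_left hdvd _
    have h6 := (padicNorm.dvd_iff_norm_le (p := p) (n := 1) (z := m)).mp (by exact_mod_cast hdm)
    simpa using h6
  · -- congruence part
    have h7 : ((p : ℤ) ^ (d + 1)) ∣ ((-(p : ℤ)) ^ d * d.factorial * r.factorial
        - ((d * p + r).factorial : ℤ)) := by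
      rw [key]
      have heq : (-(p : ℤ)) ^ d * d.factorial * r.factorial - (p : ℤ) ^ d * d.factorial * N
          = (p : ℤ) ^ d * (d.factorial * ((-1) ^ d * r.factorial - N)) := by
        rw [neg_pow]
        ring
      rw [heq, pow_succ]
      exact mul_dvd_mul_left _ (Dvd.dvd.mul_left (dvd_sub_comm.mp hdvd) _)
    exact Int.modEq_iff_dvd.mpr h7
end

section
/- Let p ≥ 3 be a prime, and let d, d₁ ≥ 0, 0 ≤ r < r₁ ≤ p−1 be integers with d₁p + r₁ ≤ dp + r. Then v_p( C(dp+r, d₁p+r₁) ) = 1 + v_p( (d − d₁) · C(d, d₁) ). -/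
open Nat

private lemma aux_digit_sum_subadd (p : ℕ) (hp : p.Prime) (x y : ℕ) :
    (p.digits (x + y)).sum ≤ (p.digits x).sum + (p.digits y).sum := by
  haveI : Fact p.Prime := ⟨hp⟩
  have h1 := sub_one_mul_padicValNat_factorial (p := p) x
  have h2 := sub_one_mul_padicValNat_factorial (p := p) y
  have h3 := sub_one_mul_padicValNat_factorial (p := p) (x + y)
  have hdvd : x ! * y ! ∣ (x + y)! := Nat.factorial_mul_factorial_dvd_factorial_add x y
  have hv : padicValNat p (x ! * y !) ≤ padicValNat p ((x + y)!) := by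
    rw [← padicValNat_dvd_iff_le (Nat.factorial_ne_zero _)]
    exact dvd_trans pow_padicValNat_dvd hdvd
  rw [padicValNat.mul (Nat.factorial_ne_zero _) (Nat.factorial_ne_zero _)] at hv
  have hmul : (p - 1) * (padicValNat p x ! + padicValNat p y !)
      ≤ (p - 1) * padicValNat p ((x + y)!) := Nat.mul_le_mul_left _ hv
  rw [Nat.mul_add, h1, h2, h3] at hmul
  have dx := Nat.digit_sum_le p x
  have dy := Nat.digit_sum_le p y
  have dxy := Nat.digit_sum_le p (x + y)
  omega

private lemma aux_digit_sum_mul_add (p d r : ℕ) (hp : 1 < p) (hr : r < p)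
    (h : 0 < d * p + r) : (p.digits (d * p + r)).sum = r + (p.digits d).sum := by
  rw [Nat.digits_def' hp h]
  have h1 : (d * p + r) % p = r := by
    rw [Nat.mul_add_mod' d p r, Nat.mod_eq_of_lt hr]
  have h2 : (d * p + r) / p = d := by
    rw [mul_comm, Nat.mul_add_div (by omega), Nat.div_eq_of_lt hr, add_zero]
  rw [h1, h2, List.sum_cons]

/-- For a prime `p ≥ 3`, with `r < r₁ ≤ p - 1` and `d₁ p + r₁ ≤ d p + r`,
`v_p(C(dp+r, d₁p+r₁)) = 1 + v_p((d − d₁)·C(d, d₁))`. -/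
theorem padicValNat_choose_eq_succ (p d d₁ r r₁ : ℕ) (hp : p.Prime) (hp3 : 3 ≤ p)
    (hr : r < r₁) (hr₁ : r₁ ≤ p - 1) (hle : d₁ * p + r₁ ≤ d * p + r) :
    padicValNat p ((d * p + r).choose (d₁ * p + r₁))
      = 1 + padicValNat p ((d - d₁) * d.choose d₁) := by
  haveI : Fact p.Prime := ⟨hp⟩
  have hd : d₁ < d := by
    by_contra h
    push_neg at h
    have := Nat.mul_le_mul_right p h
    omega
  have hdp : d₁ * p + p ≤ d * p := by
    have := Nat.mul_le_mul_right p hd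
    calc d₁ * p + p = (d₁ + 1) * p := by ring
    _ ≤ d * p := Nat.mul_le_mul_right p hd
  -- the subtraction
  have hsub : d * p + r - (d₁ * p + r₁) = (d - d₁ - 1) * p + (p + r - r₁) := by
    have h1 : (d - d₁ - 1) * p = d * p - d₁ * p - p := by
      rw [Nat.sub_mul, Nat.sub_mul, one_mul]
    omega
  -- Kummer for big binomial
  have hK := sub_one_mul_padicValNat_choose_eq_sub_sum_digits (p := p) hle
  rw [hsub] at hK
  -- digit sums
  have h1 : (p.digits (d * p + r)).sum = r + (p.digits d).sum :=
    aux_digit_sum_mul_add p d r hp.one_lt (by omega) (by omega)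
  have h2 : (p.digits (d₁ * p + r₁)).sum = r₁ + (p.digits d₁).sum :=
    aux_digit_sum_mul_add p d₁ r₁ hp.one_lt (by omega) (by omega)
  have h3 : (p.digits ((d - d₁ - 1) * p + (p + r - r₁))).sum
      = (p + r - r₁) + (p.digits (d - d₁ - 1)).sum :=
    aux_digit_sum_mul_add p (d - d₁ - 1) (p + r - r₁) hp.one_lt (by omega) (by omega)
  rw [h1, h2, h3] at hK
  -- Kummer for small binomial
  have hK2 := sub_one_mul_padicValNat_choose_eq_sub_sum_digits (p := p) hd.le
  -- Legendre for (d - d₁)! and (d - d₁ - 1)!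
  have hF1 := sub_one_mul_padicValNat_factorial (p := p) (d - d₁)
  have hF2 := sub_one_mul_padicValNat_factorial (p := p) (d - d₁ - 1)
  have hfac : (p - 1) * padicValNat p ((d - d₁)!)
      = (p - 1) * padicValNat p (d - d₁) + (p - 1) * padicValNat p ((d - d₁ - 1)!) := by
    rw [← Nat.mul_factorial_pred (by omega : d - d₁ ≠ 0),
      padicValNat.mul (by omega) (Nat.factorial_ne_zero _), Nat.mul_add]
  -- subadditivity of digit sums
  have hS : (p.digits d).sum ≤ (p.digits d₁).sum + (p.digits (d - d₁)).sum := by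
    have := aux_digit_sum_subadd p hp d₁ (d - d₁)
    rw [Nat.add_sub_cancel' hd.le] at this
    exact this
  -- bounds
  have dm := Nat.digit_sum_le p (d - d₁)
  have dm1 := Nat.digit_sum_le p (d - d₁ - 1)
  -- split the product valuation
  have hprod : padicValNat p ((d - d₁) * d.choose d₁)
      = padicValNat p (d - d₁) + padicValNat p (d.choose d₁) :=
    padicValNat.mul (by omega) (Nat.choose_pos hd.le).ne'
  have key : (p - 1) * padicValNat p ((d * p + r).choose (d₁ * p + r₁))
      = (p - 1) * (1 + padicValNat p ((d - d₁) * d.choose d₁)) := by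
    rw [Nat.mul_add, Nat.mul_one, hprod, Nat.mul_add]
    generalize (p - 1) * padicValNat p ((d * p + r).choose (d₁ * p + r₁)) = A at hK ⊢
    generalize (p - 1) * padicValNat p (d - d₁) = B at hfac ⊢
    generalize (p - 1) * padicValNat p (d.choose d₁) = C at hK2 ⊢
    generalize (p - 1) * padicValNat p ((d - d₁)!) = E at hF1 hfac
    generalize (p - 1) * padicValNat p ((d - d₁ - 1)!) = F at hF2 hfac
    omega
  exact Nat.eq_of_mul_eq_mul_left (by omega : 0 < p - 1) key
end

section
/- Let p ≥ 3 be a prime, and let d, d₁ ≥ 0, 0 ≤ r < r₁ ≤ p−1 be integers with d₁p + r₁ ≤ dp + r. Then v_p( (-1)^{r₁−r−1} · C(dp+r, d₁p+r₁) · C(r₁, r) · (r₁ − r) / ( p · C(d, d₁) · (d − d₁) ) − 1 ) ≥ 1. -/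
open Finset Nat

section Aux

variable {p : ℕ}

private lemma window_prod' (p a b : ℕ) :
    (∏ j ∈ Ioc (a*p) (a*p+b), (j : ZMod p)) = (b.factorial : ZMod p) := by
  induction b with
  | zero => simp
  | succ b ih =>
      rw [← add_assoc, Finset.prod_Ioc_succ_top (Nat.le_add_right _ _), ih]
      have : ((a*p+b+1 : ℕ) : ZMod p) = ((b+1 : ℕ) : ZMod p) := by
        push_cast [ZMod.natCast_self]; ring
      rw [this, Nat.factorial_succ]; push_cast; ring

private lemma res_prod_blocks' (hp : p.Prime) (a : ℕ) :
    (∏ j ∈ (Ioc 0 (a*p)).filter (fun j => ¬ p ∣ j), (j : ZMod p)) = (-1)^a := by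
  haveI : Fact p.Prime := ⟨hp⟩
  have hp1 : 1 ≤ p := hp.pos
  induction a with
  | zero => simp
  | succ a ih =>
      have e1 : (a+1)*p = a*p+p := by ring
      have hsplit : Ioc 0 ((a+1)*p) = Ioc 0 (a*p) ∪ Ioc (a*p) (a*p+p) := by
        rw [Finset.Ioc_union_Ioc_eq_Ioc (Nat.zero_le _) (Nat.le_add_right _ _), e1]
      have hdisj : Disjoint ((Ioc 0 (a*p)).filter (fun j => ¬ p ∣ j))
          ((Ioc (a*p) (a*p+p)).filter (fun j => ¬ p ∣ j)) := by
        apply Finset.disjoint_filter_filter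
        simp only [Finset.disjoint_left, mem_Ioc]
        intro j h1 h2
        omega
      rw [hsplit, Finset.filter_union, Finset.prod_union hdisj, ih]
      have hwin : (Ioc (a*p) (a*p+p)).filter (fun j => ¬ p ∣ j)
          = Ioc (a*p) (a*p+(p-1)) := by
        ext j
        simp only [mem_filter, mem_Ioc]
        constructor
        · rintro ⟨hj, hnd⟩
          have : j ≠ a*p+p := by
            intro hje
            subst hje; exact hnd ⟨a+1, by ring⟩
          omega
        · rintro hj
          refine ⟨by omega, fun hdvd => ?_⟩
          obtain ⟨k, rfl⟩ := hdvd
          have e2 : p*a = a*p := by ring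
          have e3 : p*(a+1) = a*p+p := by ring
          have hk1 : a < k := Nat.lt_of_mul_lt_mul_left (a := p) (by omega)
          have hk2 : k < a+1 := Nat.lt_of_mul_lt_mul_left (a := p) (by omega)
          omega
      rw [hwin, window_prod' p a (p-1)]
      have : ((p-1).factorial : ZMod p) = -1 := ZMod.wilsons_lemma p
      rw [this]; ring

private lemma res_prod' (hp : p.Prime) (a b : ℕ) (hb : b < p) :
    (∏ j ∈ (Ioc 0 (a*p+b)).filter (fun j => ¬ p ∣ j), (j : ZMod p))
      = (-1)^a * (b.factorial : ZMod p) := by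
  have hsplit : Ioc 0 (a*p+b) = Ioc 0 (a*p) ∪ Ioc (a*p) (a*p+b) := by
    rw [Finset.Ioc_union_Ioc_eq_Ioc (Nat.zero_le _) (Nat.le_add_right _ _)]
  have hdisj : Disjoint ((Ioc 0 (a*p)).filter (fun j => ¬ p ∣ j))
      ((Ioc (a*p) (a*p+b)).filter (fun j => ¬ p ∣ j)) := by
    apply Finset.disjoint_filter_filter
    simp only [Finset.disjoint_left, mem_Ioc]
    intro j h1 h2
    omega
  have hwin : (Ioc (a*p) (a*p+b)).filter (fun j => ¬ p ∣ j) = Ioc (a*p) (a*p+b) := by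
    apply filter_true_of_mem
    intro j hj hdvd
    simp only [mem_Ioc] at hj
    obtain ⟨k, rfl⟩ := hdvd
    have e2 : p*a = a*p := by ring
    have e3 : p*(a+1) = a*p+p := by ring
    have hk1 : a < k := Nat.lt_of_mul_lt_mul_left (a := p) (by omega)
    have hk2 : k < a+1 := Nat.lt_of_mul_lt_mul_left (a := p) (by omega)
    omega
  rw [hsplit, Finset.filter_union, Finset.prod_union hdisj, res_prod_blocks' hp a,
    hwin, window_prod' p a b]

private lemma factorial_eq_prod_Ioc' (n : ℕ) : n.factorial = ∏ j ∈ Ioc 0 n, j := by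
  rw [← Finset.Icc_add_one_left_eq_Ioc, ← Finset.Ico_add_one_right_eq_Icc, zero_add, Finset.prod_Ico_id_eq_factorial n]

private lemma key_factorization' (hp : p.Prime) (a b : ℕ) (hb : b < p) :
    (a*p+b).factorial
      = p^a * a.factorial * ∏ j ∈ (Ioc 0 (a*p+b)).filter (fun j => ¬ p ∣ j), j := by
  have hp1 : 0 < p := hp.pos
  rw [factorial_eq_prod_Ioc']
  rw [← Finset.prod_filter_mul_prod_filter_not (Ioc 0 (a*p+b)) (fun j => p ∣ j)]
  congr 1
  have himg : (Ioc 0 (a*p+b)).filter (fun j => p ∣ j) = (Ioc 0 a).image (fun i => p*i) := by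
    ext j
    simp only [mem_filter, mem_Ioc, mem_image]
    constructor
    · rintro ⟨hj, k, rfl⟩
      have hk0 : k ≠ 0 := by rintro rfl; omega
      refine ⟨k, ⟨by omega, ?_⟩, rfl⟩
      have e2 : p*(a+1) = a*p+p := by ring
      have e3 : p*k ≤ a*p + b := hj.2
      have : k < a+1 := Nat.lt_of_mul_lt_mul_left (a := p) (by omega)
      omega
    · rintro ⟨i, ⟨hi1, hi2⟩, rfl⟩
      have e2 : p*a = a*p := by ring
      have : p*i ≤ p*a := Nat.mul_le_mul_left p hi2
      exact ⟨⟨by positivity, by omega⟩, ⟨i, rfl⟩⟩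
  rw [himg, Finset.prod_image (by intro x _ y _ h; exact Nat.eq_of_mul_eq_mul_left hp1 h)]
  rw [Finset.prod_mul_distrib, Finset.prod_const, Nat.card_Ioc, Nat.sub_zero,
    ← Finset.Icc_add_one_left_eq_Ioc, ← Finset.Ico_add_one_right_eq_Icc, zero_add, Finset.prod_Ico_id_eq_factorial a]

/-- Factorial factorization with unit residue: `(ap+b)! = p^a · a! · P` with
`P ≡ (-1)^a b!  (mod p)` and `p ∤ P`. -/
private lemma key' (hp : p.Prime) (a b : ℕ) (hb : b < p) :
    ∃ P : ℕ, (a*p+b).factorial = p^a * a.factorial * P ∧ ¬ p ∣ P ∧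
      (P : ZMod p) = (-1)^a * (b.factorial : ZMod p) := by
  haveI : Fact p.Prime := ⟨hp⟩
  refine ⟨(∏ j ∈ (Ioc 0 (a*p+b)).filter (fun j => ¬ p ∣ j), j),
    key_factorization' hp a b hb, ?_, ?_⟩
  · intro hdvd
    have hres : ((∏ j ∈ (Ioc 0 (a*p+b)).filter (fun j => ¬ p ∣ j), j : ℕ) : ZMod p)
        = (-1)^a * (b.factorial : ZMod p) := by
      push_cast
      exact res_prod' hp a b hb
    rw [(ZMod.natCast_eq_zero_iff _ _).2 hdvd] at hres
    have hb' : ¬ p ∣ b.factorial := by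
      intro h
      exact absurd ((Nat.Prime.dvd_factorial hp).1 h) (by omega)
    have hbz : (b.factorial : ZMod p) ≠ 0 := fun h =>
      hb' ((ZMod.natCast_eq_zero_iff _ _).1 h)
    haveI : Nontrivial (ZMod p) := ZMod.nontrivial p
    have : ((-1 : ZMod p))^a * (b.factorial : ZMod p) ≠ 0 :=
      mul_ne_zero (pow_ne_zero _ (neg_ne_zero.2 one_ne_zero)) hbz
    exact this hres.symm
  · push_cast
    exact res_prod' hp a b hb

private lemma wilson_complement' (hp : p.Prime) (t : ℕ) (ht : 1 ≤ t) (ht' : t ≤ p - 1) :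
    ((p - t).factorial : ZMod p) * ((t - 1).factorial : ZMod p) = (-1)^t := by
  haveI : Fact p.Prime := ⟨hp⟩
  have h2 : 2 ≤ p := hp.two_le
  have h1 : t - 1 ≤ p - 1 := by omega
  have hfac : (p - 1 - (t - 1)).factorial * (p-1).descFactorial (t-1) = (p-1).factorial :=
    Nat.factorial_mul_descFactorial h1
  have e1 : p - 1 - (t - 1) = p - t := by omega
  rw [e1] at hfac
  have hA := congrArg (Nat.cast : ℕ → ZMod p) hfac
  simp only [Nat.cast_mul] at hA
  rw [ZMod.cast_descFactorial (by omega), ZMod.wilsons_lemma] at hA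
  set ε : ZMod p := (-1)^(t-1) with hε
  have h4 : ε * ε = 1 := by
    rw [hε, ← pow_add]; exact Even.neg_one_pow ⟨t-1, by omega⟩
  have ht1 : (-1 : ZMod p)^t = -ε := by
    rw [hε]
    have e2 : t = (t-1)+1 := by omega
    conv_lhs => rw [e2]
    rw [pow_succ]
    ring
  rw [ht1]
  linear_combination ε * hA - (((p - t).factorial : ZMod p) * ((t-1).factorial : ZMod p)) * h4

end Aux

/-- For a prime `p ≥ 3`, with `r < r₁ ≤ p - 1` and `d₁ p + r₁ ≤ d p + r`,
`v_p( (−1)^{r₁−r−1}·C(dp+r, d₁p+r₁)·C(r₁, r)·(r₁ − r)/(p·C(d, d₁)·(d − d₁)) − 1 ) ≥ 1`. -/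
theorem padicNorm_choose_unit (p d d₁ r r₁ : ℕ) (hp : p.Prime) (hp3 : 3 ≤ p)
    (hr : r < r₁) (hr₁ : r₁ ≤ p - 1) (hle : d₁ * p + r₁ ≤ d * p + r) :
    padicNorm p
        ((-1 : ℚ) ^ (r₁ - r - 1) * ((d * p + r).choose (d₁ * p + r₁) : ℚ)
            * (r₁.choose r : ℚ) * ((r₁ : ℚ) - (r : ℚ))
            / ((p : ℚ) * (d.choose d₁ : ℚ) * ((d : ℚ) - (d₁ : ℚ))) - 1)
      ≤ (p : ℚ)⁻¹ := by
  haveI : Fact p.Prime := ⟨hp⟩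
  have hp0 : 0 < p := hp.pos
  have hr1p : r₁ < p := by omega
  have hrp : r < p := by omega
  have hd1d : d₁ < d := by
    have h1 : d₁ * p < d * p := by omega
    exact Nat.lt_of_mul_lt_mul_right h1
  obtain ⟨e, hd⟩ : ∃ e, d = d₁ + 1 + e := ⟨d - d₁ - 1, by omega⟩
  set t : ℕ := r₁ - r with htdef
  set s : ℕ := p + r - r₁ with hsdef
  have ht1 : 1 ≤ t := by omega
  have htp : t ≤ p - 1 := by omega
  have hsp : s < p := by omega
  have hseq : s = p - t := by omega
  -- factorizations of the three factorials
  obtain ⟨Pn, hPn, hPnd, hPnr⟩ := key' hp d r hrp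
  obtain ⟨Pm, hPm, hPmd, hPmr⟩ := key' hp d₁ r₁ hr1p
  obtain ⟨Pk, hPk, hPkd, hPkr⟩ := key' hp e s hsp
  set C0 : ℕ := (d*p+r).choose (d₁*p+r₁) with hC0
  set T : ℕ := d.choose d₁ * (d - d₁) with hT
  -- the subtraction
  have hsub : (d*p+r) - (d₁*p+r₁) = e*p + s := by
    have e1 : (d₁+1+e)*p = d₁*p+p+e*p := by ring
    have e2 : d*p = (d₁+1+e)*p := by rw [hd]
    omega
  have hchoose : C0 * (d₁*p+r₁).factorial * (e*p+s).factorial = (d*p+r).factorial := by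
    have h := Nat.choose_mul_factorial_mul_factorial hle
    rwa [hsub] at h
  have hdfac : d.factorial = T * (d₁.factorial * e.factorial) := by
    have h1 := Nat.choose_mul_factorial_mul_factorial (le_of_lt hd1d)
    have h2 : d - d₁ = e + 1 := by omega
    have h3 : (d - d₁).factorial = (e+1) * e.factorial := by
      rw [h2, Nat.factorial_succ]
    calc d.factorial = d.choose d₁ * d₁.factorial * (d - d₁).factorial := h1.symm
      _ = d.choose d₁ * d₁.factorial * ((e+1) * e.factorial) := by rw [h3]
      _ = (d.choose d₁ * (d - d₁)) * (d₁.factorial * e.factorial) := by rw [h2]; ring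
  -- the key integer identity
  have hstar : C0 * Pm * Pk = p * T * Pn := by
    have hpos : 0 < p^(d₁+e) * (d₁.factorial * e.factorial) := by positivity
    apply Nat.eq_of_mul_eq_mul_left hpos
    calc (p^(d₁+e) * (d₁.factorial * e.factorial)) * (C0 * Pm * Pk)
        = C0 * (p^d₁ * d₁.factorial * Pm) * (p^e * e.factorial * Pk) := by ring
      _ = C0 * (d₁*p+r₁).factorial * (e*p+s).factorial := by rw [← hPm, ← hPk]
      _ = (d*p+r).factorial := hchoose
      _ = p^d * d.factorial * Pn := hPn
      _ = p^d * (T * (d₁.factorial * e.factorial)) * Pn := by rw [hdfac]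
      _ = (p^(d₁+e) * (d₁.factorial * e.factorial)) * (p * T * Pn) := by
          rw [hd]; ring
  -- residue computation in ZMod p
  set u : ℕ := r₁.choose r * t with hu
  have hunat : u * ((t-1).factorial * r.factorial) = r₁.factorial := by
    have h1 := Nat.choose_mul_factorial_mul_factorial hr.le
    have h2 : t.factorial = t * (t-1).factorial := by
      have e2 : t = (t-1)+1 := by omega
      conv_lhs => rw [e2]
      rw [Nat.factorial_succ]
      congr 1
      omega
    calc u * ((t-1).factorial * r.factorial)
        = r₁.choose r * (t * (t-1).factorial) * r.factorial := by rw [hu]; ring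
      _ = r₁.choose r * t.factorial * r.factorial := by rw [← h2]
      _ = r₁.choose r * r.factorial * (r₁ - r).factorial := by rw [htdef]; ring
      _ = r₁.factorial := h1
  have hQne : ((t-1).factorial : ZMod p) ≠ 0 := by
    intro h
    have := (ZMod.natCast_eq_zero_iff _ _).1 h
    have := (Nat.Prime.dvd_factorial hp).1 this
    omega
  have hwils : ((s.factorial : ZMod p)) * ((t-1).factorial : ZMod p) = -(-1 : ZMod p)^(t-1) := by
    rw [hseq, wilson_complement' hp t ht1 htp]
    have e2 : t = (t-1)+1 := by omega
    conv_lhs => rw [e2]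
    rw [pow_succ]
    ring
  have hu' : (u : ZMod p) * ((t-1).factorial : ZMod p) * (r.factorial : ZMod p)
      = (r₁.factorial : ZMod p) := by
    have := congrArg (Nat.cast : ℕ → ZMod p) hunat
    push_cast at this
    linear_combination this
  have hsd : ((-1 : ZMod p))^d = -(((-1 : ZMod p))^d₁ * ((-1 : ZMod p))^e) := by
    rw [hd]; ring
  have hfin : ((-1 : ZMod p))^(t-1) * (u : ZMod p) * (Pn : ZMod p)
      = (Pm : ZMod p) * (Pk : ZMod p) := by
    rw [hPnr, hPmr, hPkr]
    apply mul_right_cancel₀ hQne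
    rw [hsd]
    linear_combination (-(((-1 : ZMod p))^(t-1) * ((-1 : ZMod p))^d₁ * ((-1 : ZMod p))^e)) * hu'
      - (((-1 : ZMod p))^d₁ * ((-1 : ZMod p))^e * (r₁.factorial : ZMod p)) * hwils
  -- integer divisibility
  have hzdvd : (p : ℤ) ∣ ((-1)^(t-1) * (u : ℤ) * (Pn : ℤ) - (Pm : ℤ) * (Pk : ℤ)) := by
    rw [← ZMod.intCast_zmod_eq_zero_iff_dvd]
    push_cast
    rw [sub_eq_zero]
    exact_mod_cast hfin
  -- nonzeroness
  have hPmne : Pm ≠ 0 := by rintro rfl; exact hPmd (dvd_zero p)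
  have hPkne : Pk ≠ 0 := by rintro rfl; exact hPkd (dvd_zero p)
  have hwne : ((Pm : ℚ) * (Pk : ℚ)) ≠ 0 :=
    mul_ne_zero (Nat.cast_ne_zero.2 hPmne) (Nat.cast_ne_zero.2 hPkne)
  have hchQ : (0:ℚ) < (d.choose d₁ : ℚ) := by exact_mod_cast Nat.choose_pos hd1d.le
  have hdd : (0:ℚ) < ((d - d₁ : ℕ) : ℚ) := by exact_mod_cast (by omega : 0 < d - d₁)
  have hpQ : (0:ℚ) < (p : ℚ) := by exact_mod_cast hp0
  have hcast : ((d : ℚ) - (d₁ : ℚ)) = ((d - d₁ : ℕ) : ℚ) := by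
    rw [Nat.cast_sub hd1d.le]
  have hcast2 : ((r₁ : ℚ) - (r : ℚ)) = ((t : ℕ) : ℚ) := by
    rw [htdef, Nat.cast_sub hr.le]
  have hBne : ((p:ℚ) * (d.choose d₁ : ℚ) * ((d - d₁ : ℕ) : ℚ)) ≠ 0 :=
    ne_of_gt (mul_pos (mul_pos hpQ hchQ) hdd)
  have hfrac : (-1 : ℚ)^(t-1) * (C0 : ℚ) * (r₁.choose r : ℚ) * ((t : ℕ) : ℚ)
      / ((p:ℚ) * (d.choose d₁ : ℚ) * ((d - d₁ : ℕ) : ℚ))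
      = ((-1 : ℚ)^(t-1) * (u : ℚ) * (Pn : ℚ)) / ((Pm : ℚ) * (Pk : ℚ)) := by
    rw [div_eq_div_iff hBne hwne]
    have hq : (C0 : ℚ) * ((Pm : ℚ) * (Pk : ℚ))
        = (p:ℚ) * ((d.choose d₁ : ℚ) * ((d - d₁ : ℕ) : ℚ)) * (Pn : ℚ) := by
      have h := congrArg (Nat.cast : ℕ → ℚ) hstar
      rw [hT] at h
      push_cast at h
      linear_combination h
    have huq : (u : ℚ) = (r₁.choose r : ℚ) * ((t : ℕ) : ℚ) := by
      rw [hu]; push_cast; ring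
    rw [huq]
    linear_combination ((-1 : ℚ)^(t-1) * (r₁.choose r : ℚ) * ((t:ℕ) : ℚ)) * hq
  have hEq : (-1 : ℚ) ^ (r₁ - r - 1) * ((d * p + r).choose (d₁ * p + r₁) : ℚ)
      * (r₁.choose r : ℚ) * ((r₁ : ℚ) - (r : ℚ))
      / ((p : ℚ) * (d.choose d₁ : ℚ) * ((d : ℚ) - (d₁ : ℚ))) - 1
      = ((((-1)^(t-1) * (u : ℤ) * (Pn : ℤ) - (Pm : ℤ) * (Pk : ℤ)) : ℤ) : ℚ)
        / ((Pm : ℚ) * (Pk : ℚ)) := by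
    rw [hcast, hcast2, ← hC0]
    have e1 : r₁ - r - 1 = t - 1 := by omega
    rw [e1, hfrac, div_sub_one hwne]
    congr 1
    push_cast
    ring
  rw [hEq, padicNorm.div]
  have hw1 : padicNorm p ((Pm : ℚ) * (Pk : ℚ)) = 1 := by
    have : ((Pm : ℚ) * (Pk : ℚ)) = ((Pm * Pk : ℕ) : ℚ) := by push_cast; ring
    rw [this, padicNorm.nat_eq_one_iff]
    intro h
    rcases (Nat.Prime.dvd_mul hp).1 h with h' | h'
    · exact hPmd h'
    · exact hPkd h'
  rw [hw1, div_one]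
  have h2 := (padicNorm.dvd_iff_norm_le
      (p := p) (n := 1) (z := ((-1)^(t-1) * (u : ℤ) * (Pn : ℤ) - (Pm : ℤ) * (Pk : ℤ)))).1
      (by simpa using hzdvd)
  simpa using h2
end

section
/- Let p ≥ 3 be a prime, d ≥ 1 an integer, 1 ≤ r₁ < p, and 0 ≤ d^∼ < d integers. Then C(dp, d^∼ p + r₁) ≡ d · C(d−1, d^∼) · C(p, r₁) (mod p²) in ℤ (in particular the difference lies in p²ℤ). -/
open Polynomial Finset

lemma aux_add_pow {R : Type*} [CommRing R] (c a : R) (h : a * a = 0) (m : ℕ) :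
    (c + a) ^ (m + 1) = c ^ (m + 1) + ((m : R) + 1) * c ^ m * a := by
  induction m with
  | zero => push_cast; ring
  | succ k ih =>
    rw [pow_succ, ih]
    push_cast
    linear_combination ((k : R) + 1) * c ^ k * h

lemma key_zmod (p d dt r₁ : ℕ) (hp : p.Prime)
    (hd : 1 ≤ d) (hr₁ : 1 ≤ r₁) (hr₁p : r₁ < p) (hdt : dt < d) :
    (((d * p).choose (dt * p + r₁) : ZMod (p ^ 2))) =
      (d : ZMod (p ^ 2)) * ((d - 1).choose dt : ZMod (p ^ 2)) * (p.choose r₁ : ZMod (p ^ 2)) := by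
  obtain ⟨m, rfl⟩ : ∃ m, d = m + 1 := ⟨d - 1, by omega⟩
  simp only [Nat.add_sub_cancel]
  set R := ZMod (p ^ 2) with hR
  have hp0 : 0 < p := hp.pos
  have hpp : (p : R) * p = 0 := by
    have h := ZMod.natCast_self (p ^ 2)
    push_cast at h
    linear_combination h
  set A : R[X] := (X + 1) ^ p - expand R p (X + 1) with hA
  have hAc : ∀ j, A.coeff j
      = ((p.choose j : R) - ((if j = p then 1 else 0) + if j = 0 then 1 else 0)) := by
    intro j
    rw [hA, coeff_sub, coeff_X_add_one_pow, map_add, expand_X, map_one, coeff_add, coeff_X_pow,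
      coeff_one]
  have hAdvd : ∀ j, ∃ b : R, A.coeff j = p * b := by
    intro j
    rw [hAc]
    rcases eq_or_ne j 0 with rfl | hj0
    · exact ⟨0, by simp [hp0.ne]⟩
    rcases lt_trichotomy j p with hjp | rfl | hjp
    · obtain ⟨c, hc⟩ := hp.dvd_choose_self hj0 hjp
      exact ⟨(c : R), by simp [hj0, hjp.ne, hc]; exact Nat.cast_mul (α := ZMod (p ^ 2)) p c⟩
    · exact ⟨0, by simp [hj0]⟩
    · exact ⟨0, by simp [hj0, hjp.ne', Nat.choose_eq_zero_of_lt hjp]⟩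
  have hAA : A * A = 0 := by
    ext k
    rw [coeff_mul, coeff_zero]
    refine Finset.sum_eq_zero fun x _ => ?_
    obtain ⟨b1, h1⟩ := hAdvd x.1
    obtain ⟨b2, h2⟩ := hAdvd x.2
    rw [h1, h2]
    linear_combination b1 * b2 * hpp
  have hX : ((X + 1 : R[X])) ^ p = expand R p (X + 1) + A := by rw [hA]; ring
  have h1 : ((X + 1 : R[X])) ^ ((m + 1) * p)
      = expand R p ((X + 1) ^ (m + 1)) + ((m + 1 : ℕ) : R[X]) * expand R p ((X + 1) ^ m) * A := by
    rw [mul_comm, pow_mul, hX, aux_add_pow _ _ hAA m, map_pow, map_pow]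
    push_cast
    ring
  have hnp : ¬ p ∣ dt * p + r₁ := by
    rw [Nat.dvd_add_right (dvd_mul_left p dt)]
    exact fun h => absurd (Nat.le_of_dvd (by omega) h) (by omega)
  have h2 := congrArg (fun q => q.coeff (dt * p + r₁)) h1
  simp only [coeff_X_add_one_pow, coeff_add] at h2
  rw [coeff_expand hp0, if_neg hnp] at h2
  have h3 : (((m + 1 : ℕ) : R[X]) * expand R p ((X + 1) ^ m) * A).coeff (dt * p + r₁)
      = ((m + 1 : ℕ) : R) * ((m.choose dt : R) * (p.choose r₁ : R)) := by
    rw [mul_assoc, ← C_eq_natCast, coeff_C_mul, coeff_mul]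
    congr 1
    rw [Finset.sum_eq_single_of_mem (dt * p, r₁)]
    · simp only
      rw [coeff_expand hp0, if_pos (dvd_mul_left p dt), Nat.mul_div_cancel dt hp0,
        coeff_X_add_one_pow, hAc, if_neg hr₁p.ne, if_neg (by omega)]
      ring
    · rw [Finset.HasAntidiagonal.mem_antidiagonal]
    · rintro ⟨i, j⟩ hmem hne
      rw [Finset.HasAntidiagonal.mem_antidiagonal] at hmem
      simp only at hmem ⊢
      rcases eq_or_ne j 0 with rfl | hj0
      · rw [hAc]
        simp [hp0.ne]
      rcases lt_trichotomy j p with hjp | rfl | hjp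
      · rw [coeff_expand hp0]
        rw [if_neg, zero_mul]
        intro hdvd
        obtain ⟨k, rfl⟩ := hdvd
        have e1 : (p * k + j) % p = j % p := Nat.mul_add_mod p k j
        have e2 : (p * dt + r₁) % p = r₁ % p := Nat.mul_add_mod p dt r₁
        have hj : j = r₁ := by
          rw [Nat.mod_eq_of_lt hjp] at e1
          rw [Nat.mod_eq_of_lt hr₁p] at e2
          rw [← e1, hmem, mul_comm dt p, e2]
        rw [hj] at hmem
        exact hne (Prod.ext (Nat.add_right_cancel hmem) hj)
      · rw [hAc]
        simp [hj0]
      · rw [hAc, if_neg hjp.ne', if_neg hj0, Nat.choose_eq_zero_of_lt hjp]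
        simp
  rw [h3, zero_add] at h2
  rw [h2]
  ring



/-- For a prime `p ≥ 3`, `d ≥ 1`, `1 ≤ r₁ < p` and `0 ≤ d^∼ < d`,
`C(dp, d^∼p + r₁) ≡ d·C(d−1, d^∼)·C(p, r₁)  (mod p²)` in `ℤ`. -/
theorem choose_modEq_sq (p d dt r₁ : ℕ) (hp : p.Prime) (hp3 : 3 ≤ p)
    (hd : 1 ≤ d) (hr₁ : 1 ≤ r₁) (hr₁p : r₁ < p) (hdt : dt < d) :
    (((d * p).choose (dt * p + r₁) : ℤ))
      ≡ (d : ℤ) * ((d - 1).choose dt : ℤ) * (p.choose r₁ : ℤ) [ZMOD ((p : ℤ) ^ 2)] := by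
  have key := key_zmod p d dt r₁ hp hd hr₁ hr₁p hdt
  have hmod : ((p : ℤ) ^ 2) = ((p ^ 2 : ℕ) : ℤ) := by push_cast; ring
  rw [hmod, ← ZMod.intCast_eq_intCast_iff]
  push_cast
  exact key
end

section
/- Let p ≥ 3 be a prime and let d_j = Δ + (−1)^j for an integer Δ = p. Then with α*_{1,k} = (−1)^{1+Δ+k} C(Δ,k) C(Δ+k, Δ−1) for 0 ≤ k ≤ Δ = p, one has: v_p(α*_{1,p-1}) = 1 and v_p(α*_{1,p}) = 1; more precisely C(p,1)C(p,0) = p and C(2p, p+1)·C(p,p) ≡ 2p (mod p²), while v_p( C(p+k, 1+k)·C(p,k) ) = 2 for 1 ≤ k ≤ p−2. -/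
open Finset

/-- Kummer's theorem specialized to `n + k < p ^ 2`: there is at most one carry. -/
lemma val_choose_add (p : ℕ) [hp : Fact p.Prime] (n k : ℕ) (h0 : 0 < n + k)
    (h2 : n + k < p ^ 2) :
    padicValNat p ((n + k).choose k) = if p ≤ k % p + n % p then 1 else 0 := by
  have hlog : Nat.log p (n + k) < 2 := Nat.log_lt_of_lt_pow h0.ne' h2
  rw [padicValNat_choose' (p := p) hlog]
  have h12 : Finset.Ico 1 2 = {1} := rfl
  rw [h12, Finset.filter_singleton]
  by_cases h : p ≤ k % p + n % p <;> simp [pow_one, h]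

/-- `C(2p, p) ≡ 2 (mod p²)` via Vandermonde. -/
lemma choose_two_mul_modEq (p : ℕ) (hp : p.Prime) :
    ((p : ℤ) ^ 2) ∣ (((2 * p).choose p : ℤ) - 2) := by
  have hp1 : 1 ≤ p := hp.one_lt.le
  have key : (2 * p).choose p
      = 2 + ∑ k ∈ Finset.Ico 1 p, p.choose k * p.choose (p - k) := by
    rw [two_mul, Nat.add_choose_eq, Finset.Nat.sum_antidiagonal_eq_sum_range_succ_mk,
      Finset.sum_range_succ, Finset.range_eq_Ico,
      Finset.sum_eq_sum_Ico_succ_bot (by omega : 0 < p)]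
    simp [Nat.choose_self, Nat.choose_zero_right]
    omega
  have hdvd : (p ^ 2 : ℕ) ∣ ∑ k ∈ Finset.Ico 1 p, p.choose k * p.choose (p - k) := by
    refine Finset.dvd_sum fun k hk => ?_
    rw [Finset.mem_Ico] at hk
    have h1 : p ∣ p.choose k := hp.dvd_choose_self (by omega) hk.2
    have h2 : p ∣ p.choose (p - k) := hp.dvd_choose_self (by omega) (by omega)
    rw [pow_two]
    exact mul_dvd_mul h1 h2
  have : (((2 * p).choose p : ℤ)) - 2
      = ((∑ k ∈ Finset.Ico 1 p, p.choose k * p.choose (p - k) : ℕ) : ℤ) := by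
    rw [key]; push_cast; ring
  rw [this]
  exact_mod_cast Int.natCast_dvd_natCast.mpr hdvd

/-- For a prime `p ≥ 3` and `Δ = p`, `ν = 1`, the coefficients
`α*_{1,k} = (−1)^{1+p+k} C(p,k) C(p+k, p−1)` satisfy:
`v_p(α*_{1,p−1}) = 1`, `v_p(α*_{1,p}) = 1`; more precisely `C(p,1)·C(p,0) = p`,
`C(2p, p+1)·C(p,p) ≡ 2p (mod p²)`, and `v_p(C(p+k, 1+k)·C(p,k)) = 2` for `1 ≤ k ≤ p−2`. -/
theorem alphaStar_valuations (p : ℕ) (hp : p.Prime) (hp3 : 3 ≤ p) :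
    padicValNat p (p.choose (p - 1) * (2 * p - 1).choose (p - 1)) = 1 ∧
    padicValNat p (p.choose p * (2 * p).choose (p - 1)) = 1 ∧
    p.choose 1 * p.choose 0 = p ∧
    (((2 * p).choose (p + 1) * p.choose p : ℤ)) ≡ 2 * (p : ℤ) [ZMOD ((p : ℤ) ^ 2)] ∧
    ∀ k : ℕ, 1 ≤ k → k ≤ p - 2 →
      padicValNat p ((p + k).choose (1 + k) * p.choose k) = 2 := by
  haveI : Fact p.Prime := ⟨hp⟩
  have hpsq : 3 * p ≤ p ^ 2 := by
    rw [pow_two]; exact Nat.mul_le_mul_right p hp3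
  -- valuation of C(p, k) for 1 ≤ k ≤ p - 1 is 1
  have hvpk : ∀ k : ℕ, 1 ≤ k → k ≤ p - 1 → padicValNat p (p.choose k) = 1 := by
    intro k hk1 hk2
    have hpk : p = (p - k) + k := by omega
    have := val_choose_add p (p - k) k (by omega) (by omega)
    rw [← hpk] at this
    rw [this, if_pos]
    rw [Nat.mod_eq_of_lt (by omega), Nat.mod_eq_of_lt (by omega)]
    omega
  -- valuation of C(2p - 1, p - 1) is 0
  have hv1 : padicValNat p ((2 * p - 1).choose (p - 1)) = 0 := by
    have h21 : 2 * p - 1 = p + (p - 1) := by omega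
    have := val_choose_add p p (p - 1) (by omega) (by omega)
    rw [← h21] at this
    rw [this, if_neg]
    rw [Nat.mod_eq_of_lt (by omega), Nat.mod_self]
    omega
  -- valuation of C(2p, p - 1) is 1
  have hv2 : padicValNat p ((2 * p).choose (p - 1)) = 1 := by
    have h21 : 2 * p = (p + 1) + (p - 1) := by omega
    have := val_choose_add p (p + 1) (p - 1) (by omega) (by omega)
    rw [← h21] at this
    rw [this, if_pos]
    rw [Nat.mod_eq_of_lt (by omega), Nat.add_mod_left, Nat.mod_eq_of_lt (by omega)]
    omega
  refine ⟨?_, ?_, ?_, ?_, ?_⟩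
  · -- C(p, p-1) * C(2p-1, p-1)
    rw [padicValNat.mul (Nat.choose_pos (by omega)).ne' (Nat.choose_pos (by omega)).ne',
      hv1, hvpk (p - 1) (by omega) le_rfl]
  · rw [Nat.choose_self, one_mul, hv2]
  · simp [Nat.choose_one_right]
  · -- C(2p, p+1) ≡ 2p mod p²
    rw [Nat.choose_self, Nat.cast_one, mul_one]
    have hsymm : (2 * p).choose (p + 1) = (2 * p).choose (p - 1) := by
      rw [← Nat.choose_symm (by omega : p + 1 ≤ 2 * p)]
      congr 1; omega
    have hA : (p : ℤ) ∣ ((2 * p).choose (p + 1) : ℤ) := by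
      rw [hsymm]
      have := pow_padicValNat_dvd (p := p) (n := (2 * p).choose (p - 1))
      rw [hv2, pow_one] at this
      exact_mod_cast this
    have h1 : ((2 * p).choose (p + 1) : ℤ) * (p + 1) = ((2 * p).choose p : ℤ) * p := by
      have := Nat.choose_succ_right_eq (2 * p) p
      have h2p : 2 * p - p = p := by omega
      rw [h2p] at this
      exact_mod_cast this
    have hB := choose_two_mul_modEq p hp
    symm
    rw [Int.modEq_iff_dvd]
    -- show p² ∣ C(2p,p+1) - 2p
    have key : ((2 * p).choose (p + 1) : ℤ) - 2 * p
        = (((2 * p).choose p : ℤ) - 2) * p - ((2 * p).choose (p + 1) : ℤ) * p := by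
      linarith [h1]
    rw [key]
    apply dvd_sub
    · exact hB.mul_right p
    · obtain ⟨c, hc⟩ := hA
      rw [hc, pow_two]
      exact ⟨c, by ring⟩
  · intro k hk1 hk2
    rw [padicValNat.mul (Nat.choose_pos (by omega)).ne' (Nat.choose_pos (by omega)).ne',
      hvpk k hk1 (by omega)]
    have hpk : p + k = (p - 1) + (1 + k) := by omega
    have := val_choose_add p (p - 1) (1 + k) (by omega) (by omega)
    rw [← hpk] at this
    rw [this, if_pos]
    rw [Nat.mod_eq_of_lt (by omega), Nat.mod_eq_of_lt (by omega)]
    omega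
end
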